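/- arXiv:2103.10715 — 2 statements merged into one kernel-verified Lean document; each statement's English description precedes it below -/
import Mathlib

section
/- Let g₁ = [[A₁,B₁],[C₁,D₁]] and g₂ = [[A₂,B₂],[C₂,D₂]] be matrices in SL(2,ℝ) that are parabolic (trace squared equals 4) with C₁ ≠ 0 and C₂ ≠ 0, and let x₁ = (A₁−D₁)/(2C₁) and x₂ = (A₂−D₂)/(2C₂) be their fixed points. Then tr(g₁·g₂) = (1/2)·tr(g₁)·tr(g₂) − C₁·C₂·(x₁−x₂)². -/
/-- **Trace of a product of two parabolic elements.**
Let `gᵢ = [[Aᵢ,Bᵢ],[Cᵢ,Dᵢ]] ∈ SL(2,ℝ)` be parabolic (`(tr gᵢ)² = 4`) with `Cᵢ ≠ 0`,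
and let `xᵢ = (Aᵢ - Dᵢ)/(2Cᵢ)` be their boundary fixed points. Then
`tr(g₁ g₂) = ½ tr(g₁) tr(g₂) - C₁ C₂ (x₁ - x₂)²`. -/
theorem trace_product_parabolic
    (A₁ B₁ C₁ D₁ A₂ B₂ C₂ D₂ : ℝ)
    (hdet₁ : A₁ * D₁ - B₁ * C₁ = 1) (hdet₂ : A₂ * D₂ - B₂ * C₂ = 1)
    (htr₁ : (A₁ + D₁) ^ 2 = 4) (htr₂ : (A₂ + D₂) ^ 2 = 4)
    (hC₁ : C₁ ≠ 0) (hC₂ : C₂ ≠ 0)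
    (x₁ x₂ : ℝ) (hx₁ : x₁ = (A₁ - D₁) / (2 * C₁)) (hx₂ : x₂ = (A₂ - D₂) / (2 * C₂)) :
    Matrix.trace (Matrix.of !![A₁, B₁; C₁, D₁] * Matrix.of !![A₂, B₂; C₂, D₂]) =
      (1 / 2) * (A₁ + D₁) * (A₂ + D₂) - C₁ * C₂ * (x₁ - x₂) ^ 2 := by
  subst hx₁ hx₂
  have h1 : (A₁ - D₁)^2 = -4 * (B₁ * C₁) := by nlinarith [sq_nonneg (A₁+D₁)]
  have h2 : (A₂ - D₂)^2 = -4 * (B₂ * C₂) := by nlinarith [sq_nonneg (A₂+D₂)]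
  rw [show ∀ M : Matrix (Fin 2) (Fin 2) ℝ, Matrix.of M = M from fun _ => rfl,
    show ∀ M : Matrix (Fin 2) (Fin 2) ℝ, Matrix.of M = M from fun _ => rfl]
  rw [Matrix.trace_fin_two]
  simp [Matrix.mul_apply, Fin.sum_univ_succ]
  field_simp
  linear_combination C₂^2*h1 + C₁^2*h2
end

section
/- Suppose real numbers γ, δ, d, μ, τ with γ > 0 satisfy cosh(d)·sinh²(γ/2) = cosh(δ/2) + cosh²(γ/2) and cosh(μ/2) = cosh(d/2)·cosh(τ/2). Then 1 + cosh(τ) = (cosh(μ) + 1)·(cosh(γ) − 1) / (cosh(δ/2) + cosh(γ)). -/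
open Real

lemma cosh_half (x : ℝ) : Real.cosh x = 2 * Real.cosh (x/2) ^ 2 - 1 := by
  have := Real.cosh_two_mul (x/2)
  rw [show 2*(x/2) = x by ring] at this
  nlinarith [Real.cosh_sq (x/2)]

/-- **The once-punctured-torus twist identity.**
Suppose real numbers `γ, δ, d, μ, τ` with `γ > 0` satisfy the right-angled hexagon /
pentagon relations
`cosh d · sinh²(γ/2) = cosh(δ/2) + cosh²(γ/2)` and
`cosh(μ/2) = cosh(d/2) · cosh(τ/2)`.
Then `1 + cosh τ = (cosh μ + 1)(cosh γ − 1)/(cosh(δ/2) + cosh γ)`. -/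
theorem twist_identity_one_one (γ δ d μ τ : ℝ) (hγ : 0 < γ)
    (h1 : Real.cosh d * Real.sinh (γ / 2) ^ 2 =
      Real.cosh (δ / 2) + Real.cosh (γ / 2) ^ 2)
    (h2 : Real.cosh (μ / 2) = Real.cosh (d / 2) * Real.cosh (τ / 2)) :
    1 + Real.cosh τ =
      (Real.cosh μ + 1) * (Real.cosh γ - 1) / (Real.cosh (δ / 2) + Real.cosh γ) := by
  have hs : Real.sinh (γ/2) ^ 2 > 0 := by
    have : Real.sinh (γ/2) > 0 := Real.sinh_pos_iff.2 (by linarith)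
    positivity
  have hcg : Real.cosh (γ/2) ^ 2 = Real.sinh (γ/2) ^ 2 + 1 := Real.cosh_sq (γ/2)
  have hd1 : Real.cosh d + 1 > 0 := by
    have := Real.cosh_pos (x := d); linarith
  -- denominator
  have hden : Real.cosh (δ/2) + Real.cosh γ = (Real.cosh d + 1) * Real.sinh (γ/2) ^ 2 := by
    rw [cosh_half γ]; nlinarith [h1]
  have hμ : Real.cosh μ + 1 = (Real.cosh d + 1) * (Real.cosh τ + 1) / 2 := by
    rw [cosh_half μ, cosh_half d, cosh_half τ, h2]; ring
  have hγ1 : Real.cosh γ - 1 = 2 * Real.sinh (γ/2) ^ 2 := by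
    rw [cosh_half γ]; linarith [Real.cosh_sq (γ/2)]
  rw [hden, hμ, hγ1]
  field_simp
  ring
end
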